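/- arXiv:2307.11620 — 3 statements merged into one kernel-verified Lean document; each statement's English description precedes it below -/
import Mathlib

section
/- Under the linear value decomposition Q_tot(o,a) = Σ_i w_i(o)·Q_i(o_i,a_i) + b(o) and V_tot(o) = Σ_i w_i(o)·V_i(o_i) + b(o), and assuming the global behavior policy factorizes as μ_tot(a|o) = Π_i μ_i(a_i|o_i), the global policy π_tot(a|o) := μ_tot(a|o)·exp((Q_tot(o,a) − V_tot(o))/α) factorizes as π_tot(a|o) = Π_i π_i(a_i|o_i), where π_i(a_i|o_i) := μ_i(a_i|o_i)·exp((w_i(o)/α)·(Q_i(o_i,a_i) − V_i(o_i))). -/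
/-- Under linear value decomposition and a factorized behavior policy, the
    global policy factorizes into local policies. -/
theorem global_policy_factorization
    {A O : Type*} [Fintype A] (n : ℕ)
    (Qi : Fin n → O → A → ℝ) (Vi : Fin n → O → ℝ)
    (μi : Fin n → O → A → ℝ)
    (w : Fin n → ℝ) (hw : ∀ i, 0 ≤ w i) (b : ℝ)
    (α : ℝ) (hα : 0 < α)
    (o : Fin n → O) (a : Fin n → A)
    (Qtot Vtot μtot πtot : ℝ)
    (hQtot : Qtot = ∑ i, w i * Qi i (o i) (a i) + b)
    (hVtot : Vtot = ∑ i, w i * Vi i (o i) + b)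
    (hμtot : μtot = ∏ i, μi i (o i) (a i))
    (hπtot : πtot = μtot * Real.exp ((Qtot - Vtot) / α)) :
    πtot = ∏ i, μi i (o i) (a i) *
      Real.exp ((w i / α) * (Qi i (o i) (a i) - Vi i (o i))) := by
  subst hQtot hVtot hμtot hπtot
  rw [Finset.prod_mul_distrib, ← Real.exp_sum]
  congr 1
  congr 1
  rw [add_sub_add_comm, sub_self, add_zero, ← Finset.sum_sub_distrib,
    Finset.sum_div]
  apply Finset.sum_congr rfl
  intro i _
  field_simp
end

section
/- Suppose for each agent i the local weights satisfy w_i > 0, and define V_i* = (α/w_i)·log(Σ_{a_i} μ_i(a_i)·exp((w_i/α)Q_i(a_i))). Then the joint value V_tot = Σ_i w_i V_i* + b satisfies V_tot = α·log(Σ_{a∈Aⁿ} μ_tot(a)·exp((Q_tot(a) − b)/α)) + b, where μ_tot(a) = Π_i μ_i(a_i) and Q_tot(a) = Σ_i w_i Q_i(a_i) + b. -/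
/-!
With `Q_tot = ∑ᵢ wᵢ Qᵢ + b` and `μ_tot = ∏ᵢ μᵢ`, the Boltzmann weight
`μ_tot(a) · exp((Q_tot(a) - b)/α)` is a product over agents of the local weights
`μᵢ(aᵢ) · exp((wᵢ/α) Qᵢ(aᵢ))`. Summing over the joint actions `a ∈ Aⁿ` therefore factors the global
partition function into the product of the local ones, and its logarithm splits into the sum of
local log-partition functions, which are exactly `(wᵢ/α) Vᵢ*`.
-/

open Finset Real

namespace Real

variable {ι κ : Type*} [Fintype ι] [DecidableEq ι] [Fintype κ]

theorem log_sum_pi_prod (f : ι → κ → ℝ) (hf : ∀ i, 0 < ∑ j, f i j) :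
    log (∑ x : ι → κ, ∏ i, f i (x i)) = ∑ i, log (∑ j, f i j) := by
  rw [← Fintype.prod_sum, log_prod fun i _ => (hf i).ne']

theorem log_sum_pi_prod_mul_exp_sum [Nonempty κ] (μ g : ι → κ → ℝ) (hμ : ∀ i j, 0 < μ i j) :
    log (∑ x : ι → κ, (∏ i, μ i (x i)) * exp (∑ i, g i (x i))) =
      ∑ i, log (∑ j, μ i j * exp (g i j)) := by
  simp only [exp_sum, ← prod_mul_distrib]
  exact log_sum_pi_prod _ fun i =>
    sum_pos (fun j _ => mul_pos (hμ i j) (exp_pos _)) univ_nonempty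

end Real

theorem local_soft_values_consistent_with_global_general
    {A : Type*} [Fintype A] [Nonempty A] (n : ℕ)
    (μi : Fin n → A → ℝ) (hμpos : ∀ i a, 0 < μi i a)
    (Qi : Fin n → A → ℝ)
    (w : Fin n → ℝ) (hw : ∀ i, 0 < w i) (b : ℝ)
    (α : ℝ)
    (Vi : Fin n → ℝ)
    (hVi : ∀ i, Vi i = (α / w i) *
      Real.log (∑ a, μi i a * Real.exp ((w i / α) * Qi i a)))
    (Vtot : ℝ) (hVtot : Vtot = ∑ i, w i * Vi i + b) :
    Vtot = α * Real.log (∑ a : Fin n → A,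
      (∏ i, μi i (a i)) *
        Real.exp (((∑ i, w i * Qi i (a i) + b) - b) / α)) + b := by
  have hlocal : ∀ i, w i * Vi i = α * log (∑ a, μi i a * exp ((w i / α) * Qi i a)) := fun i => by
    rw [hVi, ← mul_assoc, mul_div_cancel₀ _ (hw i).ne']
  have hexponent : ∀ a : Fin n → A,
      (∑ i, w i * Qi i (a i) + b - b) / α = ∑ i, (w i / α) * Qi i (a i) := fun a => by
    rw [add_sub_cancel_right, sum_div]
    exact sum_congr rfl fun i _ => (div_mul_eq_mul_div _ _ _).symm
  simp only [hVtot, hlocal, hexponent]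
  rw [log_sum_pi_prod_mul_exp_sum μi (fun i a => (w i / α) * Qi i a) hμpos, mul_sum]

/-- Local soft-value computation is consistent with the global soft value
    under linear value decomposition. -/
theorem local_soft_values_consistent_with_global
    {A : Type*} [Fintype A] [Nonempty A] (n : ℕ)
    (μi : Fin n → A → ℝ) (hμpos : ∀ i a, 0 < μi i a)
    (hμsum : ∀ i, ∑ a, μi i a = 1)
    (Qi : Fin n → A → ℝ)
    (w : Fin n → ℝ) (hw : ∀ i, 0 < w i) (b : ℝ)
    (α : ℝ) (hα : 0 < α)
    (Vi : Fin n → ℝ)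
    (hVi : ∀ i, Vi i = (α / w i) *
      Real.log (∑ a, μi i a * Real.exp ((w i / α) * Qi i a)))
    (Vtot : ℝ) (hVtot : Vtot = ∑ i, w i * Vi i + b) :
    Vtot = α * Real.log (∑ a : Fin n → A,
      (∏ i, μi i (a i)) *
        Real.exp (((∑ i, w i * Qi i (a i) + b) - b) / α)) + b :=
  local_soft_values_consistent_with_global_general n μi hμpos Qi w hw b α Vi hVi Vtot hVtot
end

section
/- If for each agent i, π_i(a_i) = μ_i(a_i)·exp((w_i/α)(Q_i(a_i) − V_i)) is a probability distribution on A, then the product policy π_tot(a) = Π_i π_i(a_i) maximizes Σ_a π(a)[Q_tot(a) − α log(π(a)/μ_tot(a))] over all probability distributions π on Aⁿ, where Q_tot(a) = Σ_i w_i Q_i(a_i) + b and μ_tot(a) = Π_i μ_i(a_i). -/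
/-- Joint optimality of factorized local policies at the global level under
    linear value decomposition. -/
theorem product_policy_globally_optimal
    {A : Type*} [Fintype A] [Nonempty A] (n : ℕ)
    (μi : Fin n → A → ℝ) (hμpos : ∀ i a, 0 < μi i a)
    (hμsum : ∀ i, ∑ a, μi i a = 1)
    (Qi : Fin n → A → ℝ) (Vi : Fin n → ℝ)
    (w : Fin n → ℝ) (hw : ∀ i, 0 < w i) (b : ℝ)
    (α : ℝ) (hα : 0 < α)
    (πi : Fin n → A → ℝ)
    (hπi : ∀ i a, πi i a = μi i a * Real.exp ((w i / α) * (Qi i a - Vi i)))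
    (hπnorm : ∀ i, ∑ a, πi i a = 1) :
    ∀ π : (Fin n → A) → ℝ, (∀ a, 0 ≤ π a) → (∑ a, π a = 1) →
      ∑ a : Fin n → A, π a * ((∑ i, w i * Qi i (a i) + b)
          - α * Real.log (π a / ∏ i, μi i (a i)))
      ≤ ∑ a : Fin n → A, (∏ i, πi i (a i)) * ((∑ i, w i * Qi i (a i) + b)
          - α * Real.log ((∏ i, πi i (a i)) / ∏ i, μi i (a i))) := by
  intro π hπ0 hπ1
  set p : (Fin n → A) → ℝ := fun a => ∏ i, πi i (a i) with hp
  have hπipos : ∀ i a, 0 < πi i a := fun i a => by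
    rw [hπi]; exact mul_pos (hμpos i a) (Real.exp_pos _)
  have hppos : ∀ a, 0 < p a := fun a => Finset.prod_pos fun i _ => hπipos i (a i)
  have hμtotpos : ∀ a : Fin n → A, 0 < ∏ i, μi i (a i) :=
    fun a => Finset.prod_pos fun i _ => hμpos i (a i)
  have hpsum : ∑ a : Fin n → A, p a = 1 := by
    have := (Fintype.prod_sum (fun i (a : A) => πi i a)).symm
    simp only [hp]
    rw [this]
    simp [hπnorm]
  set C : ℝ := b + ∑ i, w i * Vi i with hC
  -- key identity : Q_tot a - α * log (p a / μ a) = C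
  have hkey : ∀ a : Fin n → A,
      (∑ i, w i * Qi i (a i) + b) - α * Real.log (p a / ∏ i, μi i (a i)) = C := by
    intro a
    have hratio : p a / ∏ i, μi i (a i)
        = Real.exp (∑ i, (w i / α) * (Qi i (a i) - Vi i)) := by
      show (∏ i, πi i (a i)) / (∏ i, μi i (a i))
          = Real.exp (∑ i, (w i / α) * (Qi i (a i) - Vi i))
      rw [Real.exp_sum]
      rw [div_eq_iff (ne_of_gt (hμtotpos a)), ← Finset.prod_mul_distrib]
      exact Finset.prod_congr rfl fun i _ => by rw [hπi]; ring
    rw [hratio, Real.log_exp, Finset.mul_sum]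
    have : ∀ i : Fin n, α * ((w i / α) * (Qi i (a i) - Vi i))
        = w i * Qi i (a i) - w i * Vi i := by
      intro i; field_simp
    rw [Finset.sum_congr rfl fun i _ => this i, Finset.sum_sub_distrib, hC]
    ring
  -- RHS equals C
  have hRHS : ∑ a : Fin n → A, p a * ((∑ i, w i * Qi i (a i) + b)
      - α * Real.log (p a / ∏ i, μi i (a i))) = C := by
    rw [Finset.sum_congr rfl fun a _ => by rw [hkey a]]
    rw [← Finset.sum_mul, hpsum, one_mul]
  rw [hRHS]
  -- LHS ≤ C
  have hterm : ∀ a : Fin n → A,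
      π a * ((∑ i, w i * Qi i (a i) + b) - α * Real.log (π a / ∏ i, μi i (a i)))
      ≤ π a * C + α * (p a - π a) := by
    intro a
    rcases eq_or_lt_of_le (hπ0 a) with h0 | hpos
    · rw [← h0]
      simp only [zero_mul, zero_add, sub_zero, zero_sub]
      nlinarith [hppos a, hα]
    · have hQ : (∑ i, w i * Qi i (a i) + b)
          = C + α * Real.log (p a / ∏ i, μi i (a i)) := by
        rw [← hkey a]; ring
      rw [hQ]
      have hlog : Real.log (p a / ∏ i, μi i (a i)) - Real.log (π a / ∏ i, μi i (a i))
          = Real.log (p a / π a) := by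
        rw [Real.log_div (ne_of_gt (hppos a)) (ne_of_gt (hμtotpos a)),
          Real.log_div (ne_of_gt hpos) (ne_of_gt (hμtotpos a)),
          Real.log_div (ne_of_gt (hppos a)) (ne_of_gt hpos)]
        ring
      have hle : Real.log (p a / π a) ≤ p a / π a - 1 :=
        Real.log_le_sub_one_of_pos (div_pos (hppos a) hpos)
      have h2 : π a * Real.log (p a / π a) ≤ p a - π a := by
        calc π a * Real.log (p a / π a) ≤ π a * (p a / π a - 1) := by
              exact mul_le_mul_of_nonneg_left hle (le_of_lt hpos)
          _ = p a - π a := by field_simp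
      calc π a * (C + α * Real.log (p a / ∏ i, μi i (a i))
              - α * Real.log (π a / ∏ i, μi i (a i)))
          = π a * C + α * (π a * Real.log (p a / π a)) := by
            rw [← hlog]; ring
        _ ≤ π a * C + α * (p a - π a) := by nlinarith [h2]
  calc ∑ a : Fin n → A, π a * ((∑ i, w i * Qi i (a i) + b)
          - α * Real.log (π a / ∏ i, μi i (a i)))
      ≤ ∑ a : Fin n → A, (π a * C + α * (p a - π a)) :=
        Finset.sum_le_sum fun a _ => hterm a
    _ = C := by
        rw [Finset.sum_add_distrib, ← Finset.sum_mul, hπ1, ← Finset.mul_sum,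
          Finset.sum_sub_distrib, hpsum, hπ1]
        ring
end
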